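/- Let G̃ be a certified shortcut graph for strings x,y of length n: vertices {0,...,n}×{0,...,n}, all H and V edges of cost 1, plus shortcut edges e_{I,J} from (min I, min J) to (max I, max J) each with cost at least d_edit(x_I, y_J). Then the minimum cost of a path from (0,0) to (n,n) in G̃ is at least d_edit(x,y). -/

import Mathlib

/-!
The potential `f (i, j) = d_edit (x[i:], y[j:])` drops along every edge `(p, q)` of the
graph by at most `d_edit (x_I, y_J)` for the rectangle `I × J` spanned by the edge, because edit
distance is subadditive under concatenation. This is at most `1` for an H or V edge and at most
the cost of a shortcut edge by certification. Telescoping along the path gives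
`d_edit (x, y) = f (0, 0) ≤ cost + f (n, n) = cost`.
-/

open List

/-- Costs for the Levenshtein distance (as in the former `Mathlib.Data.List.EditDistance.Defs`). -/
structure Levenshtein.Cost (α β δ : Type*) where
  delete : α → δ
  insert : β → δ
  substitute : α → β → δ

/-- The default cost structure: unit costs, substitution of equal letters free. -/
def Levenshtein.defaultCost {α : Type*} [DecidableEq α] : Levenshtein.Cost α α ℕ :=
  ⟨fun _ => 1, fun _ => 1, fun a b => if a = b then 0 else 1⟩

/-- Levenshtein distance, via its defining recursion (former Mathlib `levenshtein`, at `δ = ℕ`). -/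
def levenshtein {α β : Type*} (C : Levenshtein.Cost α β ℕ) : List α → List β → ℕ
  | [], [] => 0
  | [], y :: ys => C.insert y + levenshtein C [] ys
  | x :: xs, [] => C.delete x + levenshtein C xs []
  | x :: xs, y :: ys =>
    min (C.delete x + levenshtein C xs (y :: ys))
      (min (C.insert y + levenshtein C (x :: xs) ys) (C.substitute x y + levenshtein C xs ys))

/-- Edit distance between two lists (Levenshtein distance with unit costs). -/
def edist {α : Type*} [DecidableEq α] (x y : List α) : ℕ :=
  levenshtein Levenshtein.defaultCost x y

/-- The substring of `x` indexed by the interval `I = {I.1, ..., I.2}` minus its minimum,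
i.e. the characters `x_{I.1+1}, ..., x_{I.2}` (1-indexed). -/
def sub {α : Type*} (x : List α) (I : ℕ × ℕ) : List α :=
  (x.drop I.1).take (I.2 - I.1)

theorem sub_append_drop {α : Type*} (x : List α) {a a' : ℕ} (h : a ≤ a') :
    sub x (a, a') ++ x.drop a' = x.drop a := by
  rw [sub, ← Nat.add_sub_cancel' h, ← drop_drop, Nat.add_sub_cancel' h]
  exact take_append_drop _ _

section EditDistance

variable {α : Type*} [DecidableEq α]

theorem edist_nil_left (t : List α) : _root_.edist [] t = t.length := by
  induction t with
  | nil => simp [_root_.edist, levenshtein]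
  | cons b t ih =>
    rw [_root_.edist, levenshtein, ← _root_.edist, ih, length_cons, Nat.add_comm]
    rfl

theorem edist_nil_right (s : List α) : _root_.edist s [] = s.length := by
  induction s with
  | nil => simp [_root_.edist, levenshtein]
  | cons a s ih =>
    rw [_root_.edist, levenshtein, ← _root_.edist, ih, length_cons, Nat.add_comm]
    rfl

theorem edist_cons_cons (a b : α) (s t : List α) :
    _root_.edist (a :: s) (b :: t) =
      min (1 + _root_.edist s (b :: t))
        (min (1 + _root_.edist (a :: s) t) ((if a = b then 0 else 1) + _root_.edist s t)) := by
  rw [_root_.edist, levenshtein]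
  rfl

theorem edist_cons_left_le (a : α) (s t : List α) :
    _root_.edist (a :: s) t ≤ 1 + _root_.edist s t := by
  cases t with
  | nil => simp [edist_nil_right, Nat.add_comm]
  | cons b t => rw [edist_cons_cons]; omega

theorem edist_cons_right_le (s : List α) (b : α) (t : List α) :
    _root_.edist s (b :: t) ≤ 1 + _root_.edist s t := by
  cases s with
  | nil => simp [edist_nil_left, Nat.add_comm]
  | cons a s => rw [edist_cons_cons]; omega

theorem edist_append_le (s₁ s₂ t₁ t₂ : List α) :
    _root_.edist (s₁ ++ s₂) (t₁ ++ t₂) ≤ _root_.edist s₁ t₁ + _root_.edist s₂ t₂ := by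
  induction s₁ generalizing t₁ with
  | nil =>
    induction t₁ with
    | nil => simp [edist_nil_left]
    | cons b t₁ ih =>
      have := edist_cons_right_le s₂ b (t₁ ++ t₂)
      simp only [nil_append, cons_append, edist_nil_left, length_cons] at ih this ⊢
      omega
  | cons a s₁ ihs =>
    induction t₁ with
    | nil =>
      have h₁ := edist_cons_left_le a (s₁ ++ s₂) t₂
      have h₂ := ihs []
      simp only [nil_append, cons_append, edist_nil_right, length_cons] at h₁ h₂ ⊢
      omega
    | cons b t₁ iht =>
      have h₁ := ihs (b :: t₁)
      have h₂ := ihs t₁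
      simp only [cons_append] at iht h₁ ⊢
      rw [edist_cons_cons, edist_cons_cons]
      omega

theorem edist_drop_le (x y : List α) {a a' b b' : ℕ} (ha : a ≤ a') (hb : b ≤ b') :
    _root_.edist (x.drop a) (y.drop b) ≤
      _root_.edist (sub x (a, a')) (sub y (b, b')) + _root_.edist (x.drop a') (y.drop b') := by
  rw [← sub_append_drop x ha, ← sub_append_drop y hb]
  exact edist_append_le _ _ _ _

theorem edist_sub_succ_left_le (x y : List α) (a b : ℕ) :
    _root_.edist (sub x (a, a + 1)) (sub y (b, b)) ≤ 1 := by
  simp [sub, edist_nil_right]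

theorem edist_sub_succ_right_le (x y : List α) (a b : ℕ) :
    _root_.edist (sub x (a, a)) (sub y (b, b + 1)) ≤ 1 := by
  simp [sub, edist_nil_left]

end EditDistance

theorem le_sum_add_of_isChain {V : Type*} (f : V → ℕ) (moves : List (V × V × ℕ))
    (hstep : ∀ mv ∈ moves, f mv.1 ≤ mv.2.2 + f mv.2.1)
    (hchain : moves.IsChain (fun a b => a.2.1 = b.1)) {p q : V}
    (hp : moves.head?.map (·.1) = some p) (hq : moves.getLast?.map (·.2.1) = some q) :
    f p ≤ (moves.map (·.2.2)).sum + f q := by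
  induction moves generalizing p with
  | nil => simp at hp
  | cons m rest ih =>
    simp only [head?_cons, Option.map_some, Option.some.injEq] at hp
    subst hp
    have hm := hstep m mem_cons_self
    cases rest with
    | nil =>
      simp only [getLast?_singleton, Option.map_some, Option.some.injEq] at hq
      simp [← hq, hm]
    | cons r rs =>
      rw [getLast?_cons_cons] at hq
      obtain ⟨hmr, hrest⟩ := isChain_cons_cons.mp hchain
      have := ih (fun mv h => hstep mv (mem_cons_of_mem _ h)) hrest (p := m.2.1) (by simp [hmr]) hq
      simp only [map_cons, sum_cons] at this ⊢
      omega

/-- in a certified shortcut graph (H and V edges of cost 1 plus shortcut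
edges e_{I,J} whose cost is at least d_edit(x_I, y_J)), every path from (0,0) to (n,n)
has cost at least d_edit(x,y). A path is given as a list of moves (p, q, c). -/
theorem stmt13 {α : Type*} [DecidableEq α] (n : ℕ) (x y : List α)
    (hx : x.length = n) (hy : y.length = n)
    (E : List ((ℕ × ℕ) × (ℕ × ℕ) × ℕ))
    (hE : ∀ e ∈ E, e.1.1 < e.1.2 ∧ e.2.1.1 < e.2.1.2 ∧
      edist (sub x e.1) (sub y e.2.1) ≤ e.2.2)
    (moves : List ((ℕ × ℕ) × (ℕ × ℕ) × ℕ))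
    (hvalid : ∀ mv ∈ moves,
      (mv.2.1 = (mv.1.1 + 1, mv.1.2) ∧ mv.2.2 = 1) ∨
      (mv.2.1 = (mv.1.1, mv.1.2 + 1) ∧ mv.2.2 = 1) ∨
      (∃ e ∈ E, mv.1 = (e.1.1, e.2.1.1) ∧ mv.2.1 = (e.1.2, e.2.1.2) ∧ mv.2.2 = e.2.2))
    (hchain : moves.Chain' (fun a b => a.2.1 = b.1))
    (hstart : moves.head?.map (·.1) = some (0, 0))
    (hend : moves.getLast?.map (·.2.1) = some (n, n)) :
    edist x y ≤ (moves.map (·.2.2)).sum := by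
  set f : ℕ × ℕ → ℕ := fun p => _root_.edist (x.drop p.1) (y.drop p.2)
  have hstep : ∀ mv ∈ moves, f mv.1 ≤ mv.2.2 + f mv.2.1 := by
    rintro ⟨p, q, c⟩ hmv
    rcases hvalid _ hmv with ⟨hq, rfl⟩ | ⟨hq, rfl⟩ | ⟨e, he, hp, hq, rfl⟩ <;>
      dsimp only at hq <;> subst hq
    · exact (edist_drop_le x y (Nat.le_add_right _ 1) le_rfl).trans
        (Nat.add_le_add_right (edist_sub_succ_left_le x y _ _) _)
    · exact (edist_drop_le x y le_rfl (Nat.le_add_right _ 1)).trans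
        (Nat.add_le_add_right (edist_sub_succ_right_le x y _ _) _)
    · dsimp only at hp
      subst hp
      obtain ⟨hI, hJ, hcost⟩ := hE e he
      exact (edist_drop_le x y hI.le hJ.le).trans (Nat.add_le_add_right hcost _)
  have hfinal : f (n, n) = 0 := by
    simp [f, drop_eq_nil_of_le, hx, hy, edist_nil_left]
  calc edist x y = f (0, 0) := by simp [f]
    _ ≤ (moves.map (·.2.2)).sum + f (n, n) :=
      le_sum_add_of_isChain f moves hstep hchain hstart hend
    _ = (moves.map (·.2.2)).sum := by rw [hfinal, add_zero]
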